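/- arXiv:2405.02278 — 3 statements merged into one kernel-verified Lean document; each statement's English description precedes it below -/
import Mathlib

section
/- Let p : (n-subsets of {1,...,m}) → ℝ≥0 be a probability distribution (summing to 1). For each (n-k)-subset T define p(T) := (1/C(n,k)) · Σ_{S ⊇ T, |S|=n} p(S). For each n-subset S define the recycled value p_R(S) := Σ_{T ⊆ S, |T|=n-k} p(T). Then Σ_{S, |S|=n} p_R(S) = C(m-n+k, k). Consequently, (1/C(m-n+k,k)) · p_R is a probability distribution on n-subsets. -/
open Finset

/-- Number of `n`-subsets of `Fin m` containing a fixed set `T` of size `n - k`. -/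
lemma card_supersets (m n k : ℕ) (hkn : k ≤ n) (T : Finset (Fin m))
    (hT : T.card = n - k) :
    (((Finset.univ : Finset (Fin m)).powersetCard n).filter (fun S => T ⊆ S)).card
      = (m - (n - k)).choose k := by
  have hcompl : (Finset.univ \ T).card = m - (n - k) := by
    rw [card_sdiff_of_subset (subset_univ T), card_univ, Fintype.card_fin, hT]
  rw [← hcompl, ← card_powersetCard]
  apply Finset.card_bij' (fun S _ => S \ T) (fun U _ => U ∪ T)
  · intro S hS
    simp only [mem_filter, mem_powersetCard] at hS
    obtain ⟨⟨_, hcard⟩, hTS⟩ := hS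
    rw [mem_powersetCard]
    constructor
    · exact sdiff_subset_sdiff (subset_univ S) (Subset.refl T)
    · rw [card_sdiff_of_subset hTS, hcard, hT]
      omega
  · intro U hU
    rw [mem_powersetCard] at hU
    obtain ⟨hUsub, hUcard⟩ := hU
    have hdisj : Disjoint U T := by
      exact disjoint_of_subset_left hUsub (sdiff_disjoint)
    simp only [mem_filter, mem_powersetCard]
    refine ⟨⟨subset_univ _, ?_⟩, subset_union_right⟩
    rw [card_union_of_disjoint hdisj, hUcard, hT]
    omega
  · intro S hS
    simp only [mem_filter] at hS
    exact sdiff_union_of_subset hS.2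
  · intro U hU
    rw [mem_powersetCard] at hU
    have hdisj : Disjoint U T :=
      disjoint_of_subset_left hU.1 (sdiff_disjoint)
    exact union_sdiff_cancel_right hdisj

/-- The sum of the (unnormalised) recycled probabilities over all `n`-subsets
equals `C(m-n+k, k)`, so dividing by `C(m-n+k,k)` yields a probability
distribution. -/
theorem stmt1 (m n k : ℕ) (hk : 1 ≤ k) (hkn : k ≤ n) (hnm : n ≤ m)
    (p : Finset (Fin m) → ℝ) (hp : ∀ S, 0 ≤ p S)
    (hsum : ∑ S ∈ (Finset.univ : Finset (Fin m)).powersetCard n, p S = 1) :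
    ∑ S ∈ (Finset.univ : Finset (Fin m)).powersetCard n,
      (∑ T ∈ S.powersetCard (n - k),
        (1 / (n.choose k : ℝ)) *
          ∑ S' ∈ ((Finset.univ : Finset (Fin m)).powersetCard n).filter (fun S' => T ⊆ S'), p S')
      = ((m - n + k).choose k : ℝ) := by
  set f : Finset (Fin m) → ℝ := fun T =>
    (1 / (n.choose k : ℝ)) *
      ∑ S' ∈ ((Finset.univ : Finset (Fin m)).powersetCard n).filter (fun S' => T ⊆ S'), p S'
    with hf
  -- swap the outer double sum
  have hswap : ∑ S ∈ (Finset.univ : Finset (Fin m)).powersetCard n,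
      ∑ T ∈ S.powersetCard (n - k), f T
      = ∑ T ∈ (Finset.univ : Finset (Fin m)).powersetCard (n - k),
          ∑ S ∈ ((Finset.univ : Finset (Fin m)).powersetCard n).filter (fun S => T ⊆ S), f T := by
    apply Finset.sum_comm'
    intro S T
    simp only [mem_powersetCard, mem_filter, subset_univ, true_and]
    tauto
  rw [hswap]
  have hcount : ∀ T ∈ (Finset.univ : Finset (Fin m)).powersetCard (n - k),
      ∑ S ∈ ((Finset.univ : Finset (Fin m)).powersetCard n).filter (fun S => T ⊆ S), f T
        = ((m - (n - k)).choose k : ℝ) * f T := by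
    intro T hT
    rw [Finset.sum_const, card_supersets m n k hkn T (mem_powersetCard.1 hT).2,
      nsmul_eq_mul]
  rw [Finset.sum_congr rfl hcount, ← Finset.mul_sum]
  -- now swap the inner sum
  have hswap2 : ∑ T ∈ (Finset.univ : Finset (Fin m)).powersetCard (n - k), f T
      = (1 / (n.choose k : ℝ)) * ∑ T ∈ (Finset.univ : Finset (Fin m)).powersetCard (n - k),
          ∑ S' ∈ ((Finset.univ : Finset (Fin m)).powersetCard n).filter (fun S' => T ⊆ S'), p S' := by
    rw [Finset.mul_sum]
  rw [hswap2]
  have hswap3 : ∑ T ∈ (Finset.univ : Finset (Fin m)).powersetCard (n - k),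
      ∑ S' ∈ ((Finset.univ : Finset (Fin m)).powersetCard n).filter (fun S' => T ⊆ S'), p S'
      = ∑ S' ∈ (Finset.univ : Finset (Fin m)).powersetCard n,
          ∑ T ∈ S'.powersetCard (n - k), p S' := by
    apply Finset.sum_comm'
    intro T S'
    simp only [mem_powersetCard, mem_filter, subset_univ, true_and]
    tauto
  rw [hswap3]
  have hinner : ∀ S' ∈ (Finset.univ : Finset (Fin m)).powersetCard n,
      ∑ T ∈ S'.powersetCard (n - k), p S' = (n.choose k : ℝ) * p S' := by
    intro S' hS'
    rw [Finset.sum_const, card_powersetCard, (mem_powersetCard.1 hS').2, nsmul_eq_mul,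
      Nat.choose_symm hkn]
  rw [Finset.sum_congr rfl hinner, ← Finset.mul_sum, hsum, mul_one]
  have hchoose : (n.choose k : ℝ) ≠ 0 := by
    exact Nat.cast_ne_zero.2 (Nat.choose_pos hkn).ne'
  have : m - (n - k) = m - n + k := by omega
  rw [this]
  field_simp
end

section
/- Let p be a probability distribution on N := C(m,n) points with mean μ = 1/N, and let p_R be the normalized recycled distribution, where each normalized recycled probability is a convex combination (with equal weights 1/(C(m-n+k,k)·C(n,k))) of values of p. Then the variance of the multiset {p_R(S)}_S is at most the variance of the multiset {p(S)}_S, i.e. (1/N) Σ_S (p_R(S) − μ)² ≤ (1/N) Σ_S (p(S) − μ)². -/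
open Finset

-- count of size-n supersets of a fixed (n-k)-set
lemma aux_count {m n k : ℕ} (hkn : k ≤ n) (hnm : n ≤ m)
    (T : Finset (Fin m)) (hT : T.card = n - k) :
    (((univ : Finset (Fin m)).powersetCard n).filter (fun S' => T ⊆ S')).card
      = (m - n + k).choose k := by
  have key : (((univ : Finset (Fin m)).powersetCard n).filter (fun S' => T ⊆ S')).card
      = (((univ : Finset (Fin m)) \ T).powersetCard k).card := by
    apply card_bij' (fun S' _ => S' \ T) (fun U _ => U ∪ T)
    · intro S' hS'
      simp only [mem_filter, mem_powersetCard_univ] at hS'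
      rw [mem_powersetCard]
      refine ⟨fun x hx => ?_, ?_⟩
      · simp only [mem_sdiff] at hx ⊢; exact ⟨mem_univ _, hx.2⟩
      · rw [card_sdiff_of_subset hS'.2, hS'.1, hT]; omega
    · intro U hU
      rw [mem_powersetCard] at hU
      have hdisj : Disjoint U T := by
        rw [Finset.disjoint_left]
        intro x hxU hxT
        have := hU.1 hxU
        simp only [mem_sdiff] at this
        exact this.2 hxT
      simp only [mem_filter, mem_powersetCard_univ]
      refine ⟨?_, subset_union_right⟩
      rw [card_union_of_disjoint hdisj, hU.2, hT]; omega
    · intro S' hS'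
      simp only [mem_filter] at hS'
      exact sdiff_union_of_subset hS'.2
    · intro U hU
      rw [mem_powersetCard] at hU
      have hdisj : Disjoint U T := by
        rw [Finset.disjoint_left]
        intro x hxU hxT
        have := hU.1 hxU
        simp only [mem_sdiff] at this
        exact this.2 hxT
      rw [union_sdiff_distrib, sdiff_self]
      simp [Finset.sdiff_eq_self_iff_disjoint]
      exact hdisj
  rw [key, card_powersetCard, card_sdiff_of_subset (subset_univ T), card_univ, Fintype.card_fin, hT]
  congr 1; omega

/-- The variance of the set of normalised recycled probabilities is at most
the variance of the set of ideal probabilities. -/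
theorem stmt4 (m n k : ℕ) (hk : 1 ≤ k) (hkn : k ≤ n) (hnm : n ≤ m)
    (p : Finset (Fin m) → ℝ) (hp : ∀ S, 0 ≤ p S)
    (hsum : ∑ S ∈ (Finset.univ : Finset (Fin m)).powersetCard n, p S = 1) :
    (1 / (m.choose n : ℝ)) *
      ∑ S ∈ (Finset.univ : Finset (Fin m)).powersetCard n,
        ((∑ T ∈ S.powersetCard (n - k),
            ∑ S' ∈ ((Finset.univ : Finset (Fin m)).powersetCard n).filter (fun S' => T ⊆ S'), p S')
          / (((m - n + k).choose k : ℝ) * (n.choose k : ℝ))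
          - 1 / (m.choose n : ℝ)) ^ 2
    ≤ (1 / (m.choose n : ℝ)) *
        ∑ S ∈ (Finset.univ : Finset (Fin m)).powersetCard n,
          (p S - 1 / (m.choose n : ℝ)) ^ 2 := by
  set P := (Finset.univ : Finset (Fin m)).powersetCard n with hP
  set Q := (Finset.univ : Finset (Fin m)).powersetCard (n - k) with hQdef
  set μ : ℝ := 1 / (m.choose n : ℝ) with hμ
  set A : ℕ := (m - n + k).choose k with hA
  set B : ℕ := n.choose k with hB
  have hApos : 0 < A := Nat.choose_pos (by omega)
  have hBpos : 0 < B := Nat.choose_pos hkn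
  have hcR : (0:ℝ) < (A:ℝ) * (B:ℝ) := by positivity
  have hcne : ((A:ℝ) * (B:ℝ)) ≠ 0 := ne_of_gt hcR
  -- cardinality facts
  have hcount : ∀ T ∈ Q, (P.filter (fun S' => T ⊆ S')).card = A := by
    intro T hT
    rw [mem_powersetCard_univ] at hT
    exact aux_count hkn hnm T hT
  have hpow : ∀ S ∈ P, S.powersetCard (n - k) = Q.filter (fun T => T ⊆ S) := by
    intro S hS
    ext T
    simp only [mem_powersetCard, hQdef, mem_filter, mem_powersetCard_univ, subset_univ,
      true_and]
    tauto
  have hBcard : ∀ S ∈ P, (S.powersetCard (n - k)).card = B := by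
    intro S hS
    rw [mem_powersetCard_univ] at hS
    rw [card_powersetCard, hS, Nat.choose_symm hkn]
  -- swap lemma: double-counting
  have swap : ∀ g : Finset (Fin m) → ℝ,
      ∑ S ∈ P, ∑ T ∈ S.powersetCard (n - k), ∑ S' ∈ P.filter (fun S' => T ⊆ S'), g S'
        = ((A:ℝ) * (B:ℝ)) * ∑ S' ∈ P, g S' := by
    intro g
    have h1 : ∀ S ∈ P, (∑ T ∈ S.powersetCard (n - k),
          ∑ S' ∈ P.filter (fun S' => T ⊆ S'), g S')
        = ∑ T ∈ Q, if T ⊆ S then (∑ S' ∈ P.filter (fun S' => T ⊆ S'), g S') else 0 := by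
      intro S hS
      rw [hpow S hS, sum_filter]
    rw [sum_congr rfl h1, sum_comm]
    have h2 : ∀ T ∈ Q, (∑ S ∈ P,
          if T ⊆ S then (∑ S' ∈ P.filter (fun S' => T ⊆ S'), g S') else 0)
        = (A:ℝ) * ∑ S' ∈ P.filter (fun S' => T ⊆ S'), g S' := by
      intro T hT
      rw [← sum_filter, sum_const, nsmul_eq_mul, hcount T hT]
    rw [sum_congr rfl h2, ← mul_sum]
    have h3 : ∀ T ∈ Q, (∑ S' ∈ P.filter (fun S' => T ⊆ S'), g S')
        = ∑ S' ∈ P, if T ⊆ S' then g S' else 0 := by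
      intro T hT; rw [sum_filter]
    rw [sum_congr rfl h3, sum_comm]
    have h4 : ∀ S' ∈ P, (∑ T ∈ Q, if T ⊆ S' then g S' else 0) = (B:ℝ) * g S' := by
      intro S' hS'
      rw [← sum_filter, sum_const, nsmul_eq_mul, ← hpow S' hS', hBcard S' hS']
    rw [sum_congr rfl h4, ← mul_sum, ← mul_assoc]
  -- per-S Jensen
  have key : ∀ S ∈ P,
      ((∑ T ∈ S.powersetCard (n - k), ∑ S' ∈ P.filter (fun S' => T ⊆ S'), p S')
          / ((A:ℝ) * (B:ℝ)) - μ) ^ 2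
        ≤ (1 / ((A:ℝ) * (B:ℝ))) *
            ∑ T ∈ S.powersetCard (n - k), ∑ S' ∈ P.filter (fun S' => T ⊆ S'),
              (p S' - μ) ^ 2 := by
    intro S hS
    rw [sum_sigma' (S.powersetCard (n - k)) (fun T => P.filter (fun S' => T ⊆ S'))
      (fun _ S' => p S'),
      sum_sigma' (S.powersetCard (n - k)) (fun T => P.filter (fun S' => T ⊆ S'))
      (fun _ S' => (p S' - μ) ^ 2)]
    set Zs := (S.powersetCard (n - k)).sigma (fun T => P.filter (fun S' => T ⊆ S')) with hZ
    have hZcard : ((Zs.card : ℕ) : ℝ) = (A:ℝ) * (B:ℝ) := by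
      rw [hZ, card_sigma]
      have : ∀ T ∈ S.powersetCard (n - k), (P.filter (fun S' => T ⊆ S')).card = A := by
        intro T hT
        exact aux_count hkn hnm T (mem_powersetCard.1 hT).2
      rw [sum_congr rfl this, sum_const, smul_eq_mul, hBcard S hS]
      push_cast; ring
    have hstep : (∑ z ∈ Zs, p z.2) / ((A:ℝ) * (B:ℝ)) - μ
        = (∑ z ∈ Zs, (p z.2 - μ)) / ((A:ℝ) * (B:ℝ)) := by
      rw [sum_sub_distrib, sum_const, nsmul_eq_mul, hZcard, sub_div,
        mul_div_cancel_left₀ _ hcne]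
    calc ((∑ z ∈ Zs, p z.2) / ((A:ℝ) * (B:ℝ)) - μ) ^ 2
        = (∑ z ∈ Zs, (p z.2 - μ)) ^ 2 / ((A:ℝ) * (B:ℝ)) ^ 2 := by rw [hstep, div_pow]
      _ ≤ ((Zs.card : ℝ) * ∑ z ∈ Zs, (p z.2 - μ) ^ 2) / ((A:ℝ) * (B:ℝ)) ^ 2 := by
          gcongr
          exact sq_sum_le_card_mul_sum_sq
      _ = (1 / ((A:ℝ) * (B:ℝ))) * ∑ z ∈ Zs, (p z.2 - μ) ^ 2 := by
          rw [hZcard]; field_simp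
  have main : (∑ S ∈ P,
      ((∑ T ∈ S.powersetCard (n - k), ∑ S' ∈ P.filter (fun S' => T ⊆ S'), p S')
        / ((A:ℝ) * (B:ℝ)) - μ) ^ 2) ≤ ∑ S ∈ P, (p S - μ) ^ 2 := by
    calc (∑ S ∈ P,
        ((∑ T ∈ S.powersetCard (n - k), ∑ S' ∈ P.filter (fun S' => T ⊆ S'), p S')
          / ((A:ℝ) * (B:ℝ)) - μ) ^ 2)
        ≤ ∑ S ∈ P, (1 / ((A:ℝ) * (B:ℝ))) *
            ∑ T ∈ S.powersetCard (n - k), ∑ S' ∈ P.filter (fun S' => T ⊆ S'),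
              (p S' - μ) ^ 2 := sum_le_sum key
      _ = (1 / ((A:ℝ) * (B:ℝ))) *
            ∑ S ∈ P, ∑ T ∈ S.powersetCard (n - k), ∑ S' ∈ P.filter (fun S' => T ⊆ S'),
              (p S' - μ) ^ 2 := by rw [mul_sum]
      _ = (1 / ((A:ℝ) * (B:ℝ))) * (((A:ℝ) * (B:ℝ)) * ∑ S' ∈ P, (p S' - μ) ^ 2) := by
            rw [swap (fun S' => (p S' - μ) ^ 2)]
      _ = ∑ S ∈ P, (p S - μ) ^ 2 := by field_simp
  have hμ0 : (0:ℝ) ≤ μ := by rw [hμ]; positivity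
  exact mul_le_mul_of_nonneg_left main (by rw [hμ]; positivity)
end

section
/- Let 0 ≤ η₀ < η₁ < … < η_n < 1 be real numbers. Then max_{0≤i≤n} ∏_{j≠i} (1 + η_i)/|η_i − η_j| ≥ 1/(1−η₀)^n. -/
/-- The Vandermonde-based extrapolation error bound dominates the
postselection error bound (second extrapolation method). -/
theorem stmt14 (n : ℕ) (η : Fin (n + 1) → ℝ) (hmono : StrictMono η)
    (h0 : 0 ≤ η 0) (h1 : η (Fin.last n) < 1) :
    1 / (1 - η 0) ^ n ≤
      Finset.univ.sup' Finset.univ_nonempty (fun i =>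
        ∏ j ∈ Finset.univ.erase i, (1 + η i) / |η i - η j|) := by
  have h00 : η 0 < 1 := lt_of_le_of_lt (hmono.monotone (Fin.le_last 0)) h1
  refine le_trans ?_ (Finset.le_sup' _ (Finset.mem_univ (0 : Fin (n+1))))
  have key : ∀ j ∈ Finset.univ.erase (0 : Fin (n+1)),
      1 / (1 - η 0) ≤ (1 + η 0) / |η 0 - η j| := by
    intro j hj
    have hj0 : (0 : Fin (n+1)) < j := Fin.pos_iff_ne_zero.2 (Finset.ne_of_mem_erase hj)
    have hlt : η 0 < η j := hmono hj0
    have hjl : η j ≤ η (Fin.last n) := hmono.monotone (Fin.le_last j)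
    have habs : |η 0 - η j| = η j - η 0 := by
      rw [abs_sub_comm]; exact abs_of_pos (by linarith)
    rw [habs, div_le_div_iff₀ (by linarith) (by linarith)]
    nlinarith [sq_nonneg (η 0)]
  calc 1 / (1 - η 0) ^ n
      = ∏ j ∈ Finset.univ.erase (0 : Fin (n+1)), 1 / (1 - η 0) := by
        rw [Finset.prod_const, Finset.card_erase_of_mem (Finset.mem_univ _),
          Finset.card_univ, Fintype.card_fin]
        simp [div_pow]
    _ ≤ _ := Finset.prod_le_prod (fun j _ => le_of_lt (by rw [one_div]; exact inv_pos.2 (by linarith))) key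
end
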